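/- Let A be an m×n matrix with nonnegative entries, β > 0, ω > 0, L > 0 with 4ω(1+β)/(βL) ≤ 1, and η ∈ (0, 1/4], and let B = [−ω, 0]^n. Let x ∈ B, z₀ ∈ B, define z ∈ B coordinatewise by z_i = Π_{[−ω,0]}( (z₀)_i − ωη ∇̄_i f_r(x) ), set y = x + (1/(ηL))(z − z₀), let C = 3ηL and ν = ∇f_r(x) − ∇̄f_r(x) ∈ [0,∞)^n. Then for all u ∈ B: ⟨ην, z₀ − u⟩ + η²L⟨∇̄f_r(x), x − y⟩ ≤ C ( f_r(x) − f_r(y) ). -/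

import Mathlib

open scoped BigOperators

/-- The regularized objective `f_r` for the 1-fair packing problem. -/
noncomputable def fr {m n : ℕ} (A : Matrix (Fin m) (Fin n) ℝ) (β : ℝ)
    (x : Fin n → ℝ) : ℝ :=
  -(∑ j, x j) + (β / (1 + β)) *
    ∑ i, (A.mulVec (fun j => Real.exp (x j)) i) ^ ((1 + β) / β)

/-- The `j`-th coordinate of the gradient of `f_r`. -/
noncomputable def gradFr {m n : ℕ} (A : Matrix (Fin m) (Fin n) ℝ) (β : ℝ)
    (x : Fin n → ℝ) (j : Fin n) : ℝ :=
  -1 + ∑ i, (A.mulVec (fun j' => Real.exp (x j')) i) ^ (1 / β) * A i j * Real.exp (x j)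

/-!
Write `p = (1 + β) / β` and `t = y - x`, so that `t_j = (z_j - z0_j) / (ηL)` and, since the
clipped step moves by at most `ωη`, `|t_j| ≤ ω / L ≤ 1 / (4p)`. On this range a second-order
bound for `(∑_j a_j e^{t_j})^p` with nonnegative weights (a homogeneous Bernoulli inequality plus
a mean value bound for `r ↦ r^(p-1)`) gives the descent inequality
`f_r(y) ≤ f_r(x) + ⟨∇f_r(x), t⟩ + (11/6) p ∑_j (∇_j f_r(x) + 1) t_j²`.
The claim then splits into one inequality per coordinate, which only uses that `z0_j - z_j` lies
between `0` and `ωη ∇̄_j f_r(x)`: if `∇_j f_r(x) ≤ 1` the quadratic term is absorbed by the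
linear one, and if `∇_j f_r(x) > 1` the step `z0_j - z_j` is at least `η (z0_j - u_j)`, which
pays for the regret `η ν_j (z0_j - u_j)`.
-/

open Real Finset Matrix

lemma Real.exp_le_one_add_add_two_thirds_mul_sq {t : ℝ} (ht : |t| ≤ 1 / 4) :
    exp t ≤ 1 + t + 2 / 3 * t ^ 2 := by
  have hb := (abs_le.1 (Real.exp_bound (ht.trans (by norm_num)) (n := 3) (by norm_num))).2
  have hcube : |t| ^ 3 ≤ 1 / 4 * t ^ 2 := by
    rw [pow_succ, sq_abs, mul_comm]
    exact mul_le_mul_of_nonneg_right ht (sq_nonneg t)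
  norm_num [Finset.sum_range_succ, Nat.factorial] at hb
  nlinarith

lemma Real.exp_one_fourth_le : exp (1 / 4) ≤ 4 / 3 :=
  (Real.exp_bound_div_one_sub_of_interval (by norm_num) (by norm_num)).trans_eq (by norm_num)

lemma Real.tangent_le_rpow_of_one_le {γ x y : ℝ} (hγ : 1 ≤ γ) (hx : 0 < x) (hy : 0 ≤ y) :
    x ^ γ + γ * x ^ (γ - 1) * (y - x) ≤ y ^ γ := by
  have h := one_add_mul_self_le_rpow_one_add (s := y / x - 1)
    (by linarith [div_nonneg hy hx.le]) hγ
  rw [add_sub_cancel, Real.div_rpow hy hx.le, le_div_iff₀ (by positivity)] at h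
  have e : x ^ γ + γ * x ^ (γ - 1) * (y - x) = (1 + γ * (y / x - 1)) * x ^ γ := by
    rw [Real.rpow_sub_one hx.ne']
    field_simp
  rw [e]
  exact h

lemma Real.rpow_le_tangent_of_le_one {γ x y : ℝ} (hγ₀ : 0 ≤ γ) (hγ₁ : γ ≤ 1) (hx : 0 < x)
    (hy : 0 ≤ y) : y ^ γ ≤ x ^ γ + γ * x ^ (γ - 1) * (y - x) := by
  have h := rpow_one_add_le_one_add_mul_self (s := y / x - 1)
    (by linarith [div_nonneg hy hx.le]) hγ₀ hγ₁
  rw [add_sub_cancel, Real.div_rpow hy hx.le, div_le_iff₀ (by positivity)] at h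
  have e : x ^ γ + γ * x ^ (γ - 1) * (y - x) = (1 + γ * (y / x - 1)) * x ^ γ := by
    rw [Real.rpow_sub_one hx.ne']
    field_simp
  rw [e]
  exact h

lemma Real.abs_rpow_sub_rpow_le {γ x y : ℝ} (hγ : 0 ≤ γ) (hx : 0 < x) (hy : 0 < y) :
    |y ^ γ - x ^ γ| ≤ γ * max (x ^ (γ - 1)) (y ^ (γ - 1)) * |y - x| := by
  wlog hxy : x ≤ y generalizing x y
  · rw [abs_sub_comm, max_comm, abs_sub_comm y]
    exact this hy hx (le_of_not_ge hxy)
  have hmono : x ^ γ ≤ y ^ γ := Real.rpow_le_rpow hx.le hxy hγ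
  rw [abs_of_nonneg (sub_nonneg.2 hmono), abs_of_nonneg (sub_nonneg.2 hxy)]
  rcases le_total 1 γ with hγ₁ | hγ₁
  · have h := Real.tangent_le_rpow_of_one_le hγ₁ hy hx.le
    have hmax := mul_le_mul_of_nonneg_right (le_max_right (x ^ (γ - 1)) (y ^ (γ - 1)))
      (mul_nonneg hγ (sub_nonneg.2 hxy))
    linarith
  · have h := Real.rpow_le_tangent_of_le_one hγ hγ₁ hx hy.le
    have hmax := mul_le_mul_of_nonneg_right (le_max_left (x ^ (γ - 1)) (y ^ (γ - 1)))
      (mul_nonneg hγ (sub_nonneg.2 hxy))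
    linarith

lemma Real.rpow_le_one_add_mul_sub_one_add {p r : ℝ} (hp : 1 ≤ p) (hr : 0 < r) :
    r ^ p ≤ 1 + p * (r - 1) + p * (p - 1) * max (r ^ (p - 2)) 1 * (r - 1) ^ 2 := by
  have htangent := Real.tangent_le_rpow_of_one_le hp hr zero_le_one
  rw [Real.one_rpow] at htangent
  have hmv := Real.abs_rpow_sub_rpow_le (sub_nonneg.2 hp) zero_lt_one hr
  rw [Real.one_rpow, Real.one_rpow, sub_sub, one_add_one_eq_two, max_comm] at hmv
  have hprod :
      (r ^ (p - 1) - 1) * (r - 1) ≤ (p - 1) * max (r ^ (p - 2)) 1 * (r - 1) ^ 2 := by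
    calc (r ^ (p - 1) - 1) * (r - 1) ≤ |r ^ (p - 1) - 1| * |r - 1| := by
          rw [← abs_mul]; exact le_abs_self _
      _ ≤ (p - 1) * max (r ^ (p - 2)) 1 * |r - 1| * |r - 1| :=
          mul_le_mul_of_nonneg_right hmv (abs_nonneg _)
      _ = (p - 1) * max (r ^ (p - 2)) 1 * (r - 1) ^ 2 := by rw [mul_assoc, ← sq, sq_abs]
  linarith [mul_le_mul_of_nonneg_left hprod (by linarith : (0:ℝ) ≤ p)]

lemma Real.rpow_le_exp_mul_abs {D e r : ℝ} (hr₀ : exp (-D) ≤ r) (hr₁ : r ≤ exp D) :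
    r ^ e ≤ exp (D * |e|) := by
  have hr : 0 < r := (exp_pos _).trans_le hr₀
  have hlog : |log r| ≤ D := abs_le.2
    ⟨(Real.le_log_iff_exp_le hr).2 hr₀, (Real.log_le_iff_le_exp hr).2 hr₁⟩
  rw [Real.rpow_def_of_pos hr, exp_le_exp]
  calc log r * e ≤ |log r * e| := le_abs_self _
    _ = |log r| * |e| := abs_mul _ _
    _ ≤ D * |e| := mul_le_mul_of_nonneg_right hlog (abs_nonneg e)

/- `(|l| + 2q/3)² ≤ q (1 + 4D/3 + 4D²/9) ≤ 49q/36` and `r ^ (p - 2) ≤ exp (1/4) ≤ 4/3`; with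
`r - 1 ≤ l + 2q/3` this leaves `(2/3) p + (49/27) p (p - 1) ≤ (11/6) p²` to check. -/
lemma rpow_le_one_add_of_moment_bounds {p D r l q : ℝ} (hp : 1 < p) (hD : 4 * p * D ≤ 1)
    (hr₀ : exp (-D) ≤ r) (hr₁ : r ≤ exp D) (hl : |l| ≤ D) (hlq : l ^ 2 ≤ q) (hqD : q ≤ D ^ 2)
    (hlow : 1 + l ≤ r) (hup : r ≤ 1 + l + 2 / 3 * q) :
    r ^ p ≤ 1 + p * l + 11 / 6 * p ^ 2 * q := by
  have hpD : p * D ≤ 1 / 4 := by linarith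
  have hD₀ : 0 ≤ D := (abs_nonneg l).trans hl
  have hD₄ : D ≤ 1 / 4 := by nlinarith
  have hq : 0 ≤ q := (sq_nonneg l).trans hlq
  have hK : max (r ^ (p - 2)) 1 ≤ 4 / 3 := by
    refine max_le ?_ (by norm_num)
    calc r ^ (p - 2) ≤ exp (D * |p - 2|) := Real.rpow_le_exp_mul_abs hr₀ hr₁
      _ ≤ exp (1 / 4) := by
          rw [exp_le_exp]
          nlinarith [abs_le.2 (⟨by linarith, by linarith⟩ : -p ≤ p - 2 ∧ p - 2 ≤ p)]
      _ ≤ 4 / 3 := Real.exp_one_fourth_le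
  have hsq : (r - 1) ^ 2 ≤ 49 / 36 * q := by
    have habs : |r - 1| ≤ |l| + 2 / 3 * q :=
      abs_le.2 ⟨by linarith [neg_abs_le l], by linarith [le_abs_self l]⟩
    have hlq' : |l| * q ≤ 1 / 4 * q := mul_le_mul_of_nonneg_right (hl.trans hD₄) hq
    have hqq : q * q ≤ 1 / 16 * q := mul_le_mul_of_nonneg_right (by nlinarith) hq
    calc (r - 1) ^ 2 = |r - 1| ^ 2 := (sq_abs _).symm
      _ ≤ (|l| + 2 / 3 * q) ^ 2 := pow_le_pow_left₀ (abs_nonneg _) habs 2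
      _ ≤ 49 / 36 * q := by linarith [sq_abs l]
  have hquad :
      p * (p - 1) * max (r ^ (p - 2)) 1 * (r - 1) ^ 2 ≤ 49 / 27 * p * (p - 1) * q := by
    have hp₀ : 0 ≤ p * (p - 1) := by nlinarith
    calc p * (p - 1) * max (r ^ (p - 2)) 1 * (r - 1) ^ 2
        ≤ p * (p - 1) * (4 / 3) * (49 / 36 * q) := by gcongr
      _ = 49 / 27 * p * (p - 1) * q := by ring
  have hlin : p * (r - 1) ≤ p * l + 2 / 3 * p * q := by nlinarith
  have hcoef : 2 / 3 * p + 49 / 27 * p * (p - 1) ≤ 11 / 6 * p ^ 2 := by nlinarith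
  linarith [Real.rpow_le_one_add_mul_sub_one_add hp.le ((exp_pos _).trans_le hr₀),
    mul_le_mul_of_nonneg_right hcoef hq]

lemma sum_mul_exp_rpow_le_of_sum_eq_one {ι : Type*} [Fintype ι] {p D : ℝ} (hp : 1 < p)
    (hD : 4 * p * D ≤ 1) (w t : ι → ℝ) (hw : ∀ j, 0 ≤ w j) (hw₁ : ∑ j, w j = 1)
    (ht : ∀ j, |t j| ≤ D) :
    (∑ j, w j * exp (t j)) ^ p
      ≤ 1 + p * ∑ j, w j * t j + 11 / 6 * p ^ 2 * ∑ j, w j * t j ^ 2 := by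
  have hmono : ∀ f g : ι → ℝ, (∀ j, f j ≤ g j) → ∑ j, w j * f j ≤ ∑ j, w j * g j :=
    fun f g hfg => sum_le_sum fun j _ => mul_le_mul_of_nonneg_left (hfg j) (hw j)
  have hconst : ∀ c : ℝ, ∑ j, w j * c = c := fun c => by rw [← sum_mul, hw₁, one_mul]
  have hl : |∑ j, w j * t j| ≤ D := by
    have h₀ := hmono (fun _ => -D) t fun j => (abs_le.1 (ht j)).1
    have h₁ := hmono t (fun _ => D) fun j => (abs_le.1 (ht j)).2
    rw [hconst] at h₀ h₁
    exact abs_le.2 ⟨h₀, h₁⟩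
  have hD₄ : D ≤ 1 / 4 := by nlinarith [(abs_nonneg _).trans hl]
  refine rpow_le_one_add_of_moment_bounds hp hD ?_ ?_ hl ?_ ?_ ?_ ?_
  · rw [← hconst (exp (-D))]
    exact hmono _ _ fun j => exp_le_exp.2 (neg_le_of_abs_le (ht j))
  · rw [← hconst (exp D)]
    exact hmono _ _ fun j => exp_le_exp.2 (le_of_abs_le (ht j))
  · have h := sum_sq_le_sum_mul_sum_of_sq_le_mul univ (fun j _ => hw j)
      (fun j _ => mul_nonneg (hw j) (sq_nonneg (t j))) (r := fun j => w j * t j)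
      (fun j _ => le_of_eq (by ring))
    rwa [hw₁, one_mul] at h
  · rw [← hconst (D ^ 2)]
    exact hmono _ _ fun j => sq_le_sq' (abs_le.1 (ht j)).1 (abs_le.1 (ht j)).2
  · rw [← hconst 1, ← sum_add_distrib]
    exact sum_le_sum fun j _ => by nlinarith [add_one_le_exp (t j), hw j]
  · rw [← hconst 1, mul_sum, ← sum_add_distrib, ← sum_add_distrib]
    exact sum_le_sum fun j _ => by
      nlinarith [Real.exp_le_one_add_add_two_thirds_mul_sq ((ht j).trans hD₄), hw j]

lemma sum_mul_exp_rpow_le {ι : Type*} [Fintype ι] {p D : ℝ} (hp : 1 < p)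
    (hD : 4 * p * D ≤ 1) (a t : ι → ℝ) (ha : ∀ j, 0 ≤ a j) (ht : ∀ j, |t j| ≤ D) :
    (∑ j, a j * exp (t j)) ^ p ≤ (∑ j, a j) ^ p + p * (∑ j, a j) ^ (p - 1) * ∑ j, a j * t j
      + 11 / 6 * p ^ 2 * (∑ j, a j) ^ (p - 1) * ∑ j, a j * t j ^ 2 := by
  set S := ∑ j, a j
  have hS₀ : 0 ≤ S := sum_nonneg fun j _ => ha j
  rcases hS₀.eq_or_lt with hS | hS
  · have ha₀ : ∀ j, a j = 0 := fun j =>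
      (sum_eq_zero_iff_of_nonneg fun j _ => ha j).1 hS.symm j (mem_univ j)
    simp [S, ha₀, Real.zero_rpow (by linarith : p ≠ 0)]
  have h := sum_mul_exp_rpow_le_of_sum_eq_one hp hD (fun j => a j / S) t
    (fun j => div_nonneg (ha j) hS.le) (by rw [← sum_div, div_self hS.ne']) ht
  have hscale : ∀ f : ι → ℝ, ∑ j, a j * f j = S * ∑ j, a j / S * f j := fun f => by
    rw [mul_sum]; exact sum_congr rfl fun j _ => by field_simp [hS.ne']
  have hSp : S ^ p = S * S ^ (p - 1) := by
    rw [← Real.rpow_one_add' hS.le (by linarith), add_sub_cancel]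
  have hr : 0 ≤ ∑ j, a j / S * exp (t j) :=
    sum_nonneg fun j _ => mul_nonneg (div_nonneg (ha j) hS₀) (exp_pos _).le
  rw [hscale, Real.mul_rpow hS₀ hr, hscale t, hscale (fun j => t j ^ 2), hSp]
  linarith [mul_le_mul_of_nonneg_left h (mul_pos hS (Real.rpow_pos_of_pos hS (p - 1))).le]

lemma sum_gradFr_add_one_mul {m n : ℕ} (A : Matrix (Fin m) (Fin n) ℝ) (β : ℝ)
    (x f : Fin n → ℝ) :
    ∑ j, (gradFr A β x j + 1) * f j
      = ∑ i, (A *ᵥ fun j => exp (x j)) i ^ (1 / β) * ∑ j, A i j * exp (x j) * f j := by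
  simp only [gradFr, neg_add_cancel_comm, sum_mul, mul_sum]
  rw [sum_comm]
  exact sum_congr rfl fun i _ => sum_congr rfl fun j _ => by ring

lemma neg_one_le_gradFr {m n : ℕ} {A : Matrix (Fin m) (Fin n) ℝ} (hA : ∀ i j, 0 ≤ A i j)
    (β : ℝ) (x : Fin n → ℝ) (j : Fin n) : -1 ≤ gradFr A β x j := by
  have hS : ∀ i, 0 ≤ (A *ᵥ fun j => exp (x j)) i := fun i => by
    rw [mulVec_apply_eq_sum]
    exact sum_nonneg fun j _ => mul_nonneg (hA i j) (exp_pos _).le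
  have hsum : 0 ≤ ∑ i, (A *ᵥ fun j => exp (x j)) i ^ (1 / β) * A i j * exp (x j) :=
    sum_nonneg fun i _ =>
      mul_nonneg (mul_nonneg (Real.rpow_nonneg (hS i) _) (hA i j)) (exp_pos _).le
  rw [gradFr]
  linarith

lemma fr_le_add_sum_gradFr_mul {m n : ℕ} {A : Matrix (Fin m) (Fin n) ℝ}
    (hA : ∀ i j, 0 ≤ A i j) {β D : ℝ} (hβ : 0 < β) (hD : 4 * ((1 + β) / β) * D ≤ 1)
    (x y : Fin n → ℝ) (hxy : ∀ j, |y j - x j| ≤ D) :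
    fr A β y ≤ fr A β x + ∑ j, gradFr A β x j * (y j - x j)
      + 11 / 6 * ((1 + β) / β) * ∑ j, (gradFr A β x j + 1) * (y j - x j) ^ 2 := by
  have hexp : 1 / β = (1 + β) / β - 1 := by field_simp; ring
  have hcoef : β / (1 + β) = ((1 + β) / β)⁻¹ := (inv_div _ _).symm
  set p := (1 + β) / β
  have hp : 1 < p := by rw [lt_div_iff₀ hβ]; linarith
  have hpair := sum_gradFr_add_one_mul A β x
  rw [hexp] at hpair
  have hrow : ∀ i, (A *ᵥ fun j => exp (y j)) i ^ p ≤ (A *ᵥ fun j => exp (x j)) i ^ p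
      + p * ((A *ᵥ fun j => exp (x j)) i ^ (p - 1) * ∑ j, A i j * exp (x j) * (y j - x j))
      + 11 / 6 * p ^ 2 * ((A *ᵥ fun j => exp (x j)) i ^ (p - 1)
        * ∑ j, A i j * exp (x j) * (y j - x j) ^ 2) := fun i => by
    have hSy : (A *ᵥ fun j => exp (y j)) i = ∑ j, A i j * exp (x j) * exp (y j - x j) := by
      rw [mulVec_apply_eq_sum]
      exact sum_congr rfl fun j _ => by rw [mul_assoc, ← exp_add, add_sub_cancel]
    rw [hSy, mulVec_apply_eq_sum]
    exact (sum_mul_exp_rpow_le hp hD _ _ (fun j => mul_nonneg (hA i j) (exp_pos _).le)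
      hxy).trans_eq (by ring)
  have hsum := sum_le_sum fun i (_ : i ∈ univ) => hrow i
  simp only [sum_add_distrib, ← mul_sum, ← hpair] at hsum
  have hdiff : ∑ j, gradFr A β x j * (y j - x j)
      = ∑ j, (gradFr A β x j + 1) * (y j - x j) - (∑ j, y j - ∑ j, x j) := by
    rw [← sum_sub_distrib, ← sum_sub_distrib]
    exact sum_congr rfl fun j _ => by ring
  have hexpand : ∀ b c d : ℝ,
      p⁻¹ * (b + p * c + 11 / 6 * p ^ 2 * d) = p⁻¹ * b + c + 11 / 6 * p * d :=
    fun b c d => by field_simp [(by linarith : p ≠ 0)]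
  have hscale := mul_le_mul_of_nonneg_left hsum (inv_pos.2 (by linarith : 0 < p)).le
  rw [hexpand] at hscale
  rw [fr, fr, hcoef, hdiff]
  linarith

lemma sub_clip_mul_sub_nonneg {a b c s : ℝ} (hac : a ≤ c) (hcb : c ≤ b) :
    0 ≤ (c - max a (min b (c - s))) * (s - (c - max a (min b (c - s)))) := by
  rcases le_total 0 s with hs | hs
  · rw [min_eq_right (by linarith)]
    have h₁ : c - s ≤ max a (c - s) := le_max_right _ _
    have h₂ : max a (c - s) ≤ c := max_le hac (by linarith)
    nlinarith
  · rw [max_eq_right (le_min (hac.trans hcb) (by linarith))]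
    have h₁ : min b (c - s) ≤ c - s := min_le_right _ _
    have h₂ : c ≤ min b (c - s) := le_min hcb (by linarith)
    nlinarith

lemma abs_sub_clip_le {a b c s : ℝ} (hac : a ≤ c) (hcb : c ≤ b) :
    |c - max a (min b (c - s))| ≤ |s| := by
  set w := c - max a (min b (c - s))
  have h : |w| * |w| ≤ |w| * |s| := by
    rw [← abs_mul, ← abs_mul, abs_mul_self]
    linarith [le_abs_self (w * s), sub_clip_mul_sub_nonneg (s := s) hac hcb]
  rcases (abs_nonneg w).eq_or_lt with hw | hw
  · rw [← hw]; exact abs_nonneg s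
  · exact le_of_mul_le_mul_left h hw

lemma abs_clipped_step_le {ω η L g c z t : ℝ} (hη : 0 < η) (hL : 0 < L) (hg : -1 ≤ g)
    (hc : c ∈ Set.Icc (-ω) 0) (hz : z = max (-ω) (min 0 (c - ω * η * min 1 g)))
    (ht : t = (z - c) / (η * L)) : |t| ≤ ω / L := by
  have hω : 0 ≤ ω := by linarith [hc.1, hc.2]
  have hclip : |c - z| ≤ ω * η := by
    rw [hz]
    refine (abs_sub_clip_le hc.1 hc.2).trans ?_
    rw [abs_mul, abs_of_nonneg (by positivity)]
    exact mul_le_of_le_one_right (by positivity)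
      (abs_le.2 ⟨le_min (by norm_num) hg, min_le_left _ _⟩)
  calc |t| = |c - z| / (η * L) := by
        rw [ht, abs_div, abs_of_pos (mul_pos hη hL), abs_sub_comm]
    _ ≤ ω * η / (η * L) := by gcongr
    _ = ω / L := by field_simp

-- `11/6` is the largest constant that the case `g ≤ 1`, `η = 1/4`, `4pω = L` can absorb.
lemma clipped_step_regret_add_descent_nonpos {ω η L p g c u z t : ℝ} (hω : 0 < ω) (hη : 0 < η)
    (hη₄ : η ≤ 1 / 4) (hL : 0 < L) (hp : 0 ≤ p) (hpω : 4 * p * ω ≤ L) (hg : -1 ≤ g)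
    (hc : c ∈ Set.Icc (-ω) 0) (hu : u ∈ Set.Icc (-ω) 0)
    (hz : z = max (-ω) (min 0 (c - ω * η * min 1 g))) (ht : t = (z - c) / (η * L)) :
    η * (g - min 1 g) * (c - u) - η ^ 2 * L * (min 1 g * t)
      + 3 * η * L * (g * t + 11 / 6 * p * ((g + 1) * t ^ 2)) ≤ 0 := by
  have hzc : c - z = -(η * L * t) := by rw [ht]; field_simp; ring
  have hkey : L * t ^ 2 ≤ ω * (min 1 g * -t) := by
    have h := sub_clip_mul_sub_nonneg (s := ω * η * min 1 g) hc.1 hc.2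
    rw [← hz, hzc] at h
    have h' : 0 ≤ η ^ 2 * L * (ω * (min 1 g * -t) - L * t ^ 2) := by linarith
    have := (mul_nonneg_iff_of_pos_left (by positivity)).1 h'
    linarith
  have hg₀ : 0 ≤ g + 1 := by linarith
  have hquad : 11 / 2 * η * p * (g + 1) * (L * t ^ 2)
      ≤ 11 / 8 * η * L * (g + 1) * (min 1 g * -t) := by
    have hsign : 0 ≤ min 1 g * -t := by nlinarith [sq_nonneg t]
    calc 11 / 2 * η * p * (g + 1) * (L * t ^ 2)
        ≤ 11 / 2 * η * p * (g + 1) * (ω * (min 1 g * -t)) :=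
          mul_le_mul_of_nonneg_left hkey (by positivity)
      _ = 11 / 2 * η * (g + 1) * (min 1 g * -t) * (p * ω) := by ring
      _ ≤ 11 / 2 * η * (g + 1) * (min 1 g * -t) * (L / 4) :=
          mul_le_mul_of_nonneg_left (by linarith) (by positivity)
      _ = 11 / 8 * η * L * (g + 1) * (min 1 g * -t) := by ring
  rcases le_or_gt g 1 with hg₁ | hg₁
  · rw [min_eq_right hg₁] at hquad hkey ⊢
    have hsign : 0 ≤ η * L * (g * -t) := by
      have : 0 ≤ g * -t := by nlinarith [sq_nonneg t]
      positivity
    have h₁ : η * L * (g * -t) * (g - 1) ≤ 0 :=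
      mul_nonpos_of_nonneg_of_nonpos hsign (by linarith)
    have h₂ : η * L * (g * -t) * (η - 1 / 4) ≤ 0 :=
      mul_nonpos_of_nonneg_of_nonpos hsign (by linarith)
    linarith
  · rw [min_eq_left hg₁.le] at hquad hkey hz ⊢
    have hcu : c - u ≤ -(L * t) := by
      have h₁ : -ω ≤ c - η * (c - u) := by nlinarith [hc.1, hc.2, hu.1, hu.2]
      have h₂ : c - ω * η * 1 ≤ c - η * (c - u) := by nlinarith [hc.1, hc.2, hu.1, hu.2]
      have h₃ : z ≤ c - η * (c - u) := by
        rw [hz, min_eq_right (by nlinarith [hc.2])]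
        exact max_le h₁ h₂
      nlinarith
    have hsign : 0 ≤ η * L * -t := by
      have : 0 ≤ -t := by nlinarith [sq_nonneg t]
      positivity
    have h₁ : η * (g - 1) * (c - u) ≤ η * (g - 1) * -(L * t) :=
      mul_le_mul_of_nonneg_left hcu (by nlinarith)
    have h₂ : η * L * -t * (η - 1 / 4) ≤ 0 :=
      mul_nonpos_of_nonneg_of_nonpos hsign (by linarith)
    have h₃ : η * L * -t * (1 - g) ≤ 0 := mul_nonpos_of_nonneg_of_nonpos hsign (by linarith)
    linarith

theorem gradient_descent_compensates_packing_regret_general {m n : ℕ}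
    (A : Matrix (Fin m) (Fin n) ℝ)
    (hA : ∀ i j, 0 ≤ A i j)
    (β ω η L : ℝ) (hβ : 0 < β) (hω : 0 < ω) (hL : 0 < L)
    (hstep : 4 * ω * (1 + β) / (β * L) ≤ 1)
    (hη0 : 0 < η) (hη4 : η ≤ 1 / 4)
    (x z0 z y : Fin n → ℝ)
    (hz0 : ∀ i, z0 i ∈ Set.Icc (-ω) 0)
    (hz : ∀ i, z i = max (-ω) (min 0 (z0 i - ω * η * min 1 (gradFr A β x i))))
    (hy : y = x + (1 / (η * L)) • (z - z0)) :
    ∀ u : Fin n → ℝ, (∀ i, u i ∈ Set.Icc (-ω) 0) →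
      (∑ i, η * (gradFr A β x i - min 1 (gradFr A β x i)) * (z0 i - u i))
        + η ^ 2 * L * ∑ i, min 1 (gradFr A β x i) * (x i - y i)
      ≤ 3 * η * L * (fr A β x - fr A β y) := by
  intro u hu
  have hpω : 4 * ((1 + β) / β) * ω ≤ L := by
    rw [div_le_one (by positivity)] at hstep
    rw [mul_div_assoc', div_mul_eq_mul_div, div_le_iff₀ hβ]
    linarith
  have hyx : ∀ i, y i - x i = (z i - z0 i) / (η * L) := fun i => by
    rw [hy]; simp only [Pi.add_apply, Pi.smul_apply, Pi.sub_apply, smul_eq_mul]; ring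
  have hdesc := fr_le_add_sum_gradFr_mul hA hβ (D := ω / L)
    (by rw [← mul_div_assoc, div_le_one hL]; exact hpω) x y fun i =>
      abs_clipped_step_le hη0 hL (neg_one_le_gradFr hA β x i) (hz0 i) (hz i) (hyx i)
  have hcoord := sum_nonpos fun i (_ : i ∈ univ) =>
    clipped_step_regret_add_descent_nonpos hω hη0 hη4 hL (by positivity) hpω
      (neg_one_le_gradFr hA β x i) (hz0 i) (hu i) (hz i) (hyx i)
  simp only [sum_add_distrib, sum_sub_distrib, ← mul_sum] at hcoord
  have hxy : ∑ i, min 1 (gradFr A β x i) * (x i - y i)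
      = -∑ i, min 1 (gradFr A β x i) * (y i - x i) := by
    rw [← sum_neg_distrib]; exact sum_congr rfl fun i _ => by ring
  rw [hxy]
  linarith [mul_le_mul_of_nonneg_left hdesc (by positivity : (0:ℝ) ≤ 3 * η * L)]

/-- Gradient descent compensates for the remaining regret: with the mirror step
`z` (clipping to `[-ω,0]`) and the gradient step `y`, the leftover regret from
the gradient truncation `ν = ∇f_r(x) - ∇̄f_r(x)` is bounded via the descent. -/
theorem gradient_descent_compensates_packing_regret {m n : ℕ}
    (A : Matrix (Fin m) (Fin n) ℝ)
    (hA : ∀ i j, 0 ≤ A i j)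
    (β ω η L : ℝ) (hβ : 0 < β) (hω : 0 < ω) (hL : 0 < L)
    (hstep : 4 * ω * (1 + β) / (β * L) ≤ 1)
    (hη0 : 0 < η) (hη4 : η ≤ 1 / 4)
    (x z0 z y : Fin n → ℝ)
    (hx : ∀ i, x i ∈ Set.Icc (-ω) 0)
    (hz0 : ∀ i, z0 i ∈ Set.Icc (-ω) 0)
    (hz : ∀ i, z i = max (-ω) (min 0 (z0 i - ω * η * min 1 (gradFr A β x i))))
    (hy : y = x + (1 / (η * L)) • (z - z0)) :
    ∀ u : Fin n → ℝ, (∀ i, u i ∈ Set.Icc (-ω) 0) →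
      (∑ i, η * (gradFr A β x i - min 1 (gradFr A β x i)) * (z0 i - u i))
        + η ^ 2 * L * ∑ i, min 1 (gradFr A β x i) * (x i - y i)
      ≤ 3 * η * L * (fr A β x - fr A β y) :=
  gradient_descent_compensates_packing_regret_general A hA β ω η L hβ hω hL hstep hη0 hη4 x z0 z y
    hz0 hz hy
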